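/- arXiv:1810.11677 — 3 statements merged into one kernel-verified Lean document; each statement's English description precedes it below -/
import Mathlib

section
/- Let (Y,X,Z) have joint distribution Q⁰ = P_{YX} × e_{Z|X} for some channel e from X to Z (i.e., Y−X−Z form a Markov chain under Q⁰). Then the unique information UI(Y;X∖Z) evaluated at Q⁰ equals the conditional mutual information I_{Q⁰}(Y;X|Z). -/
open scoped BigOperators
open Real

noncomputable section

variable {W X Y Z : Type*}

/-- A channel (row-stochastic conditional distribution) from `X` to `Y`. -/
def IsChannel [Fintype Y] (k : X → Y → ℝ) : Prop :=
  (∀ x y, 0 ≤ k x y) ∧ ∀ x, ∑ y, k x y = 1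

/-- A probability distribution on a finite set. -/
def IsDist [Fintype X] (p : X → ℝ) : Prop :=
  (∀ x, 0 ≤ p x) ∧ ∑ x, p x = 1

/-- Composition of a decoder `d : Z → Y` with an encoder `e : X → Z`:
`(d ∘ e)(y|x) = ∑ z d(y|z) e(z|x)`. -/
def chComp [Fintype Z] (d : Z → Y → ℝ) (e : X → Z → ℝ) : X → Y → ℝ :=
  fun x y => ∑ z, d z y * e x z

/-- Conditional KL divergence `D(k ‖ l | pi) = ∑_x pi x ∑_y k(y|x) log (k(y|x)/l(y|x))`. -/
def condKL [Fintype X] [Fintype Y] (pi : X → ℝ) (k l : X → Y → ℝ) : ℝ :=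
  ∑ x, pi x * ∑ y, k x y * Real.log (k x y / l x y)

/-- Deficiency of a decoder `d` w.r.t. a channel `k`, weighted by `pi`:
the infimum over encoders `e` of `D(k ‖ d∘e | pi)`. -/
def deficiency [Fintype X] [Fintype Y] [Fintype Z]
    (pi : X → ℝ) (d : Z → Y → ℝ) (k : X → Y → ℝ) : ℝ :=
  sInf {r : ℝ | ∃ e : X → Z → ℝ, IsChannel e ∧ r = condKL pi k (chComp d e)}

/-- A joint probability mass function for a triple `(Y, X, Z)`. -/
def IsPMF3 [Fintype X] [Fintype Y] [Fintype Z] (p : Y → X → Z → ℝ) : Prop :=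
  (∀ y x z, 0 ≤ p y x z) ∧ ∑ y, ∑ x, ∑ z, p y x z = 1

def mYX [Fintype Z] (p : Y → X → Z → ℝ) : Y → X → ℝ := fun y x => ∑ z, p y x z
def mYZ [Fintype X] (p : Y → X → Z → ℝ) : Y → Z → ℝ := fun y z => ∑ x, p y x z
def mXZ [Fintype Y] (p : Y → X → Z → ℝ) : X → Z → ℝ := fun x z => ∑ y, p y x z
def mX  [Fintype Y] [Fintype Z] (p : Y → X → Z → ℝ) : X → ℝ := fun x => ∑ y, ∑ z, p y x z
def mY  [Fintype X] [Fintype Z] (p : Y → X → Z → ℝ) : Y → ℝ := fun y => ∑ x, ∑ z, p y x z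
def mZ  [Fintype X] [Fintype Y] (p : Y → X → Z → ℝ) : Z → ℝ := fun z => ∑ y, ∑ x, p y x z

/-- Mutual information of a bivariate joint distribution (in nats). -/
def MI2 [Fintype X] [Fintype Y] (q : X → Y → ℝ) : ℝ :=
  ∑ x, ∑ y, q x y * Real.log (q x y / ((∑ y', q x y') * (∑ x', q x' y)))

/-- `I(Y; (X,Z))` for a joint triple distribution (in nats). -/
def MI_Y_XZ [Fintype X] [Fintype Y] [Fintype Z] (p : Y → X → Z → ℝ) : ℝ :=
  ∑ y, ∑ x, ∑ z, p y x z * Real.log (p y x z / (mY p y * mXZ p x z))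

/-- Conditional mutual information `I(Y;X|Z)` (in nats). -/
def CMI_YX_gZ [Fintype X] [Fintype Y] [Fintype Z] (p : Y → X → Z → ℝ) : ℝ :=
  ∑ y, ∑ x, ∑ z, p y x z * Real.log ((p y x z * mZ p z) / (mYZ p y z * mXZ p x z))

/-- Conditional mutual information `I(Y;Z|X)` (in nats). -/
def CMI_YZ_gX [Fintype X] [Fintype Y] [Fintype Z] (p : Y → X → Z → ℝ) : ℝ :=
  ∑ y, ∑ x, ∑ z, p y x z * Real.log ((p y x z * mX p x) / (mYX p y x * mXZ p x z))

/-- The set `Δ_P` of joint distributions matching `p` on the `(Y,X)`- and `(Y,Z)`-marginals. -/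
def deltaP [Fintype X] [Fintype Y] [Fintype Z] (p : Y → X → Z → ℝ) : Set (Y → X → Z → ℝ) :=
  {q | IsPMF3 q ∧ mYX q = mYX p ∧ mYZ q = mYZ p}

/-- Unique information `UI(Y; X ∖ Z) = inf_{Q ∈ Δ_P} I_Q(Y;X|Z)`. -/
def UIX [Fintype X] [Fintype Y] [Fintype Z] (p : Y → X → Z → ℝ) : ℝ :=
  sInf {r : ℝ | ∃ q ∈ deltaP p, r = CMI_YX_gZ q}

/-- Unique information `UI(Y; Z ∖ X) = inf_{Q ∈ Δ_P} I_Q(Y;Z|X)`. -/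
def UIZ [Fintype X] [Fintype Y] [Fintype Z] (p : Y → X → Z → ℝ) : ℝ :=
  sInf {r : ℝ | ∃ q ∈ deltaP p, r = CMI_YZ_gX q}

/-- Shannon entropy (in nats). -/
def entropy [Fintype X] (p : X → ℝ) : ℝ := ∑ x, -(p x * Real.log (p x))

end


/-!
Both conditional mutual informations enter the chain rule
`I(Y;X|Z) + I(Y;Z) = I(Y;XZ) = I(Y;Z|X) + I(Y;X)`. On `Δ_P` the terms `I(Y;X)` and `I(Y;Z)` are
fixed by the marginal constraints, so `I_Q(Y;X|Z) = I_Q(Y;Z|X) + const` there, and minimizing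
`I(Y;X|Z)` over `Δ_P` amounts to minimizing the nonnegative `I(Y;Z|X)`. The Markov chain `Y − X − Z`
says exactly that `I(Y;Z|X)` vanishes at `P`, so `P` itself is a minimizer.
-/

open Finset Real

section Marginals

variable {X Y Z : Type*} {q : Y → X → Z → ℝ} {y : Y} {x : X} {z : Z}

lemma mYX_pos [Fintype Z] (hq : ∀ y x z, 0 ≤ q y x z) (h : 0 < q y x z) : 0 < mYX q y x :=
  sum_pos' (fun z _ => hq y x z) ⟨z, mem_univ z, h⟩

lemma mYZ_pos [Fintype X] (hq : ∀ y x z, 0 ≤ q y x z) (h : 0 < q y x z) : 0 < mYZ q y z :=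
  sum_pos' (fun x _ => hq y x z) ⟨x, mem_univ x, h⟩

lemma mXZ_pos [Fintype Y] (hq : ∀ y x z, 0 ≤ q y x z) (h : 0 < q y x z) : 0 < mXZ q x z :=
  sum_pos' (fun y _ => hq y x z) ⟨y, mem_univ y, h⟩

lemma mX_pos [Fintype Y] [Fintype Z] (hq : ∀ y x z, 0 ≤ q y x z) (h : 0 < q y x z) :
    0 < mX q x :=
  sum_pos' (fun y _ => sum_nonneg fun z _ => hq y x z) ⟨y, mem_univ y, mYX_pos hq h⟩

lemma mY_pos [Fintype X] [Fintype Z] (hq : ∀ y x z, 0 ≤ q y x z) (h : 0 < q y x z) :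
    0 < mY q y :=
  sum_pos' (fun x _ => sum_nonneg fun z _ => hq y x z) ⟨x, mem_univ x, mYX_pos hq h⟩

lemma mZ_pos [Fintype X] [Fintype Y] (hq : ∀ y x z, 0 ≤ q y x z) (h : 0 < q y x z) :
    0 < mZ q z :=
  sum_pos' (fun y _ => sum_nonneg fun x _ => hq y x z) ⟨y, mem_univ y, mYZ_pos hq h⟩

end Marginals

lemma sub_le_mul_log_div {a b : ℝ} (ha : 0 ≤ a) (hb : 0 ≤ b) (hab : 0 < a → 0 < b) :
    a - b ≤ a * log (a / b) := by
  rcases ha.eq_or_lt with rfl | ha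
  · simpa using hb
  have hb := hab ha
  calc a - b = a * (1 - (a / b)⁻¹) := by field_simp
    _ ≤ a * log (a / b) := by gcongr; exact one_sub_inv_le_log_of_pos (div_pos ha hb)

section

variable {X Y Z : Type*} [Fintype X] [Fintype Y] [Fintype Z] {q : Y → X → Z → ℝ}

lemma MI2_mYX_eq_sum (q : Y → X → Z → ℝ) :
    MI2 (mYX q) = ∑ y, ∑ x, ∑ z, q y x z * log (mYX q y x / (mY q y * mX q x)) := by
  unfold MI2
  exact sum_congr rfl fun y _ => sum_congr rfl fun x _ => sum_mul _ _ _

lemma MI2_mYZ_eq_sum (q : Y → X → Z → ℝ) :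
    MI2 (mYZ q) = ∑ y, ∑ x, ∑ z, q y x z * log (mYZ q y z / (mY q y * mZ q z)) := by
  unfold MI2
  refine sum_congr rfl fun y _ => ?_
  rw [sum_comm]
  refine sum_congr rfl fun z _ => ?_
  rw [show ∑ z', mYZ q y z' = mY q y from sum_comm]
  exact sum_mul _ _ _

lemma CMI_YX_gZ_add_MI2_mYZ (hq : ∀ y x z, 0 ≤ q y x z) :
    CMI_YX_gZ q + MI2 (mYZ q) = MI_Y_XZ q := by
  rw [MI2_mYZ_eq_sum, CMI_YX_gZ, MI_Y_XZ]
  simp only [← sum_add_distrib]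
  refine sum_congr rfl fun y _ => sum_congr rfl fun x _ => sum_congr rfl fun z _ => ?_
  rcases (hq y x z).eq_or_lt with h | h
  · simp [← h]
  have := mYZ_pos hq h; have := mXZ_pos hq h; have := mY_pos hq h; have := mZ_pos hq h
  rw [← mul_add, ← log_mul (by positivity) (by positivity)]
  congr 2
  field_simp

lemma CMI_YZ_gX_add_MI2_mYX (hq : ∀ y x z, 0 ≤ q y x z) :
    CMI_YZ_gX q + MI2 (mYX q) = MI_Y_XZ q := by
  rw [MI2_mYX_eq_sum, CMI_YZ_gX, MI_Y_XZ]
  simp only [← sum_add_distrib]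
  refine sum_congr rfl fun y _ => sum_congr rfl fun x _ => sum_congr rfl fun z _ => ?_
  rcases (hq y x z).eq_or_lt with h | h
  · simp [← h]
  have := mYX_pos hq h; have := mXZ_pos hq h; have := mY_pos hq h; have := mX_pos hq h
  rw [← mul_add, ← log_mul (by positivity) (by positivity)]
  congr 2
  field_simp

lemma CMI_YZ_gX_nonneg (hq : ∀ y x z, 0 ≤ q y x z) : 0 ≤ CMI_YZ_gX q := by
  -- compare `q` with the Markov distribution `q(y,x) q(x,z) / q(x)`, which has the same total mass
  set r : Y → X → Z → ℝ := fun y x z => mYX q y x * mXZ q x z / mX q x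
  have hr : ∀ y x z, 0 ≤ r y x z := fun y x z =>
    div_nonneg (mul_nonneg (sum_nonneg fun _ _ => hq _ _ _) (sum_nonneg fun _ _ => hq _ _ _))
      (sum_nonneg fun _ _ => sum_nonneg fun _ _ => hq _ _ _)
  have hmass : ∑ y, ∑ x, ∑ z, r y x z = ∑ y, ∑ x, ∑ z, q y x z := by
    rw [sum_comm, sum_comm (f := fun y x => ∑ z, q y x z)]
    refine sum_congr rfl fun x _ => ?_
    calc ∑ y, ∑ z, r y x z = (∑ y, mYX q y x) * (∑ z, mXZ q x z) / mX q x := by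
          simp only [r, sum_mul_sum, sum_div]
      _ = mX q x * mX q x / mX q x := by rw [show ∑ z, mXZ q x z = mX q x from sum_comm]; rfl
      _ = ∑ y, ∑ z, q y x z := mul_self_div_self _
  calc (0 : ℝ) = ∑ y, ∑ x, ∑ z, (q y x z - r y x z) := by simp [sum_sub_distrib, hmass]
    _ ≤ CMI_YZ_gX q := by
      refine sum_le_sum fun y _ => sum_le_sum fun x _ => sum_le_sum fun z _ => ?_
      rw [← div_div_eq_mul_div]
      exact sub_le_mul_log_div (hq y x z) (hr y x z) fun h =>
        div_pos (mul_pos (mYX_pos hq h) (mXZ_pos hq h)) (mX_pos hq h)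

lemma CMI_YX_gZ_eq_CMI_YZ_gX_add_sub (hq : ∀ y x z, 0 ≤ q y x z) :
    CMI_YX_gZ q = CMI_YZ_gX q + MI2 (mYX q) - MI2 (mYZ q) := by
  linarith [CMI_YX_gZ_add_MI2_mYZ hq, CMI_YZ_gX_add_MI2_mYX hq]

lemma CMI_YX_gZ_le_of_mem_deltaP {p : Y → X → Z → ℝ} (hp : ∀ y x z, 0 ≤ p y x z)
    (hp0 : CMI_YZ_gX p = 0) (hq : q ∈ deltaP p) : CMI_YX_gZ p ≤ CMI_YX_gZ q := by
  obtain ⟨⟨hq, -⟩, hYX, hYZ⟩ := hq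
  calc CMI_YX_gZ p = CMI_YZ_gX p + MI2 (mYX p) - MI2 (mYZ p) :=
        CMI_YX_gZ_eq_CMI_YZ_gX_add_sub hp
    _ ≤ CMI_YZ_gX q + MI2 (mYX q) - MI2 (mYZ q) := by
      rw [hp0, hYX, hYZ]; linarith [CMI_YZ_gX_nonneg hq]
    _ = CMI_YX_gZ q := (CMI_YX_gZ_eq_CMI_YZ_gX_add_sub hq).symm

lemma UIX_eq_CMI_YX_gZ_of_CMI_YZ_gX_eq_zero {p : Y → X → Z → ℝ} (hp : IsPMF3 p)
    (hp0 : CMI_YZ_gX p = 0) : UIX p = CMI_YX_gZ p :=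
  IsLeast.csInf_eq ⟨⟨p, ⟨hp, rfl, rfl⟩, rfl⟩, by
    rintro _ ⟨q, hq, rfl⟩
    exact CMI_YX_gZ_le_of_mem_deltaP hp.1 hp0 hq⟩

lemma CMI_YZ_gX_eq_zero_of_markov {p : Y → X → Z → ℝ} {e : X → Z → ℝ}
    (hp : ∀ y x z, 0 ≤ p y x z) (hmarkov : ∀ y x z, p y x z = mYX p y x * e x z) :
    CMI_YZ_gX p = 0 := by
  refine sum_eq_zero fun y _ => sum_eq_zero fun x _ => sum_eq_zero fun z _ => ?_
  rcases (hp y x z).eq_or_lt with h | h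
  · simp [← h]
  have hXZ : mXZ p x z = mX p x * e x z :=
    calc mXZ p x z = ∑ y, mYX p y x * e x z := sum_congr rfl fun y _ => hmarkov y x z
      _ = mX p x * e x z := (sum_mul _ _ _).symm
  have hYX := mYX_pos hp h
  have hX := mX_pos hp h
  have he : e x z ≠ 0 := right_ne_zero_of_mul (hmarkov y x z ▸ h.ne')
  have h1 : p y x z * mX p x / (mYX p y x * mXZ p x z) = 1 := by
    rw [hXZ, hmarkov y x z]; field_simp
  rw [h1, log_one, mul_zero]

end

theorem UI_eq_CMI_of_markov_general
    {X Y Z : Type*} [Fintype X] [Fintype Y] [Fintype Z]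
    (p : Y → X → Z → ℝ) (hp : IsPMF3 p)
    (e : X → Z → ℝ)
    (hmarkov : ∀ y x z, p y x z = mYX p y x * e x z) :
    UIX p = CMI_YX_gZ p :=
  UIX_eq_CMI_YX_gZ_of_CMI_YZ_gX_eq_zero hp (CMI_YZ_gX_eq_zero_of_markov hp.1 hmarkov)

/-- for a zero-synergy distribution `Q⁰ = P_{YX} × e_{Z|X}` (Markov chain
`Y − X − Z`), the unique information `UI(Y;X∖Z)` equals `I_{Q⁰}(Y;X|Z)`. -/
theorem UI_eq_CMI_of_markov
    {X Y Z : Type*} [Fintype X] [Fintype Y] [Fintype Z]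
    (p : Y → X → Z → ℝ) (hp : IsPMF3 p)
    (e : X → Z → ℝ) (he : IsChannel e)
    (hmarkov : ∀ y x z, p y x z = mYX p y x * e x z) :
    UIX p = CMI_YX_gZ p :=
  UI_eq_CMI_of_markov_general p hp e hmarkov
end

section
/- Let δ^X and δ^Z be nonnegative reals satisfying δ^X ≤ min{I(Y;X), I(Y;X|Z)} and δ^Z ≤ min{I(Y;Z), I(Y;Z|X)} for a joint distribution of finite random variables (Y,X,Z). Define ŨI(Y;X∖Z) = max{δ^X, δ^Z + I(Y;X) − I(Y;Z)}, ŨI(Y;Z∖X) = max{δ^Z, δ^X + I(Y;Z) − I(Y;X)}, S̃I = min{I(Y;X) − δ^X, I(Y;Z) − δ^Z}, C̃I = min{I(Y;X|Z) − δ^X, I(Y;Z|X) − δ^Z}. Then all four quantities are nonnegative and satisfy: I(Y;X) = ŨI(Y;X∖Z) + S̃I, I(Y;X|Z) = ŨI(Y;X∖Z) + C̃I, and I(Y;XZ) = ŨI(Y;X∖Z) + ŨI(Y;Z∖X) + S̃I + C̃I. -/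
open scoped BigOperators
open Real

/-!
Applying the chain rule in both orders gives
`I(Y;X) + I(Y;Z|X) = I(Y;XZ) = I(Y;Z) + I(Y;X|Z)`, so `I(Y;X) - δ^X ≤ I(Y;Z) - δ^Z` holds
exactly when `I(Y;X|Z) - δ^X ≤ I(Y;Z|X) - δ^Z`. Hence one comparison settles all four
`max`/`min` at once, and every claim becomes linear arithmetic. The chain rule itself is the
termwise identity `log (p / (p_Y p_XZ)) = log (p_YX / (p_Y p_X)) + log (p p_X / (p_YX p_XZ))`
on the support of `p`; the second order follows from the first by exchanging `X` and `Z`.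
-/

lemma mul_log_div_eq_add {p a b c d : ℝ} (hp : 0 ≤ p)
    (hpos : 0 < p → 0 < a ∧ 0 < b ∧ 0 < c ∧ 0 < d) :
    p * log (p / (a * b)) = p * log (c / (a * d)) + p * log (p * d / (c * b)) := by
  rcases hp.eq_or_lt with rfl | hp
  · simp
  obtain ⟨ha, hb, hc, hd⟩ := hpos hp
  rw [← mul_add, ← log_mul (by positivity) (by positivity)]
  congr 2
  field_simp

section Marginals

variable {X Y Z : Type*} {p : Y → X → Z → ℝ}

lemma le_mYX [Fintype Z] (h0 : ∀ y x z, 0 ≤ p y x z) (y : Y) (x : X) (z : Z) :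
    p y x z ≤ mYX p y x :=
  Finset.single_le_sum (fun z _ => h0 y x z) (Finset.mem_univ z)

lemma le_mXZ [Fintype Y] (h0 : ∀ y x z, 0 ≤ p y x z) (y : Y) (x : X) (z : Z) :
    p y x z ≤ mXZ p x z :=
  Finset.single_le_sum (fun y _ => h0 y x z) (Finset.mem_univ y)

lemma mYX_le_mY [Fintype X] [Fintype Z] (h0 : ∀ y x z, 0 ≤ p y x z) (y : Y) (x : X) :
    mYX p y x ≤ mY p y :=
  Finset.single_le_sum (fun x _ => Finset.sum_nonneg fun z _ => h0 y x z) (Finset.mem_univ x)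

lemma mYX_le_mX [Fintype Y] [Fintype Z] (h0 : ∀ y x z, 0 ≤ p y x z) (y : Y) (x : X) :
    mYX p y x ≤ mX p x :=
  Finset.single_le_sum (f := fun y => mYX p y x)
    (fun y _ => Finset.sum_nonneg fun z _ => h0 y x z) (Finset.mem_univ y)

lemma mY_swap [Fintype X] [Fintype Z] (p : Y → X → Z → ℝ) :
    mY (fun y z x => p y x z) = mY p :=
  funext fun _ => Finset.sum_comm

end Marginals

section ChainRule

variable {X Y Z : Type*} [Fintype X] [Fintype Y] [Fintype Z]

theorem MI_Y_XZ_eq_MI2_add_CMI_YZ_gX (p : Y → X → Z → ℝ) (h0 : ∀ y x z, 0 ≤ p y x z) :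
    MI_Y_XZ p = MI2 (mYX p) + CMI_YZ_gX p := by
  have hsplit : ∀ y x z, p y x z * log (p y x z / (mY p y * mXZ p x z)) =
      p y x z * log (mYX p y x / (mY p y * mX p x)) +
        p y x z * log (p y x z * mX p x / (mYX p y x * mXZ p x z)) := fun y x z =>
    mul_log_div_eq_add (h0 y x z) fun h =>
      have hYX := h.trans_le (le_mYX h0 y x z)
      ⟨hYX.trans_le (mYX_le_mY h0 y x), h.trans_le (le_mXZ h0 y x z), hYX,
        hYX.trans_le (mYX_le_mX h0 y x)⟩
  simp only [MI_Y_XZ, hsplit, Finset.sum_add_distrib, ← Finset.sum_mul]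
  rfl

theorem MI_Y_XZ_swap (p : Y → X → Z → ℝ) : MI_Y_XZ (fun y z x => p y x z) = MI_Y_XZ p := by
  simp only [MI_Y_XZ, mY_swap]
  exact Finset.sum_congr rfl fun _ _ => Finset.sum_comm

theorem CMI_YZ_gX_swap (p : Y → X → Z → ℝ) :
    CMI_YZ_gX (fun y z x => p y x z) = CMI_YX_gZ p :=
  Finset.sum_congr rfl fun _ _ => Finset.sum_comm

theorem MI_Y_XZ_eq_MI2_add_CMI_YX_gZ (p : Y → X → Z → ℝ) (h0 : ∀ y x z, 0 ≤ p y x z) :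
    MI_Y_XZ p = MI2 (mYZ p) + CMI_YX_gZ p := by
  rw [← MI_Y_XZ_swap, MI_Y_XZ_eq_MI2_add_CMI_YZ_gX _ fun y z x => h0 y x z, CMI_YZ_gX_swap]
  rfl

end ChainRule

theorem tilde_decomposition_of_chain_rule {iXZ iX iZ cX cZ dX dZ : ℝ}
    (hchainX : iXZ = iX + cZ) (hchainZ : iXZ = iZ + cX) (hdX0 : 0 ≤ dX) (hdZ0 : 0 ≤ dZ)
    (hdX : dX ≤ min iX cX) (hdZ : dZ ≤ min iZ cZ) :
    0 ≤ max dX (dZ + iX - iZ) ∧ 0 ≤ max dZ (dX + iZ - iX) ∧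
    0 ≤ min (iX - dX) (iZ - dZ) ∧ 0 ≤ min (cX - dX) (cZ - dZ) ∧
    iX = max dX (dZ + iX - iZ) + min (iX - dX) (iZ - dZ) ∧
    cX = max dX (dZ + iX - iZ) + min (cX - dX) (cZ - dZ) ∧
    iXZ = max dX (dZ + iX - iZ) + max dZ (dX + iZ - iX) +
      min (iX - dX) (iZ - dZ) + min (cX - dX) (cZ - dZ) := by
  obtain ⟨hdiX, hdcX⟩ := le_min_iff.mp hdX
  obtain ⟨hdiZ, hdcZ⟩ := le_min_iff.mp hdZ
  rcases le_total (iX - dX) (iZ - dZ) with h | h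
  · rw [max_eq_left (by linarith), max_eq_right (by linarith), min_eq_left h,
      min_eq_left (by linarith : cX - dX ≤ cZ - dZ)]
    exact ⟨hdX0, by linarith, by linarith, by linarith, by ring, by ring, by linarith⟩
  · rw [max_eq_right (by linarith), max_eq_left (by linarith), min_eq_right h,
      min_eq_right (by linarith : cZ - dZ ≤ cX - dX)]
    exact ⟨by linarith, hdZ0, by linarith, by linarith, by ring, by linarith, by linarith⟩

/-- any pair of nonnegative reals `dX, dZ` bounded by
`min{I(Y;X), I(Y;X|Z)}` resp. `min{I(Y;Z), I(Y;Z|X)}` induces a nonnegative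
information decomposition satisfying the required identities. -/
theorem tilde_decomposition
    {X Y Z : Type*} [Fintype X] [Fintype Y] [Fintype Z]
    (p : Y → X → Z → ℝ) (hp : IsPMF3 p)
    (dX dZ : ℝ) (hdX0 : 0 ≤ dX) (hdZ0 : 0 ≤ dZ)
    (hdX : dX ≤ min (MI2 (mYX p)) (CMI_YX_gZ p))
    (hdZ : dZ ≤ min (MI2 (mYZ p)) (CMI_YZ_gX p)) :
    0 ≤ max dX (dZ + MI2 (mYX p) - MI2 (mYZ p)) ∧
    0 ≤ max dZ (dX + MI2 (mYZ p) - MI2 (mYX p)) ∧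
    0 ≤ min (MI2 (mYX p) - dX) (MI2 (mYZ p) - dZ) ∧
    0 ≤ min (CMI_YX_gZ p - dX) (CMI_YZ_gX p - dZ) ∧
    MI2 (mYX p) =
      max dX (dZ + MI2 (mYX p) - MI2 (mYZ p)) +
        min (MI2 (mYX p) - dX) (MI2 (mYZ p) - dZ) ∧
    CMI_YX_gZ p =
      max dX (dZ + MI2 (mYX p) - MI2 (mYZ p)) +
        min (CMI_YX_gZ p - dX) (CMI_YZ_gX p - dZ) ∧
    MI_Y_XZ p =
      max dX (dZ + MI2 (mYX p) - MI2 (mYZ p)) +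
        max dZ (dX + MI2 (mYZ p) - MI2 (mYX p)) +
        min (MI2 (mYX p) - dX) (MI2 (mYZ p) - dZ) +
        min (CMI_YX_gZ p - dX) (CMI_YZ_gX p - dZ) := by
  exact tilde_decomposition_of_chain_rule (MI_Y_XZ_eq_MI2_add_CMI_YZ_gX p hp.1)
    (MI_Y_XZ_eq_MI2_add_CMI_YX_gZ p hp.1) hdX0 hdZ0 hdX hdZ
end

section
/- If X and Z are independent binary random variables with positive entropy and Y = (X,Z), then UI(Y;X∖Z) = I(Y;X|Z) = H(X) and SI(Y;X,Z) = CI(Y;X,Z) = 0. -/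
open scoped BigOperators
open Real

/-!
Because `Y = (X, Z)`, any `Q ∈ Δ_P` has `Q(y, x, z) = 0` unless `y = (x, z)`: the
`(Y,X)`-marginal kills `x ≠ y.1` and the `(Y,Z)`-marginal kills `z ≠ y.2`, and on the diagonal
`Q` equals the `(Y,X)`-marginal of `P`. So `Δ_P = {P}` and `UI(Y;X∖Z) = I_P(Y;X|Z) = H(X|Z)`,
which is `H(X)` by independence. As `X` is a function of `Y`, also `I(Y;X) = H(X)`, whence
`SI = CI = 0`.
-/

noncomputable section

open Finset

variable {X Z : Type*}

lemma mul_mul_log_of_eq_inv {a b u : ℝ} (h : a ≠ 0 → b ≠ 0 → u = a⁻¹) :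
    a * b * Real.log u = -(a * b * Real.log a) := by
  rcases eq_or_ne a 0 with rfl | ha
  · simp
  rcases eq_or_ne b 0 with rfl | hb
  · simp
  rw [h ha hb, Real.log_inv]
  ring

lemma sum_sum_neg_mul_mul_log [Fintype X] [Fintype Z] {px : X → ℝ} {pz : Z → ℝ}
    (hpz : ∑ z, pz z = 1) :
    ∑ x, ∑ z, -(px x * pz z * Real.log (px x)) = entropy px := by
  refine sum_congr rfl fun x _ => ?_
  rw [← mul_one (-(px x * Real.log (px x))), ← hpz, mul_sum]
  exact sum_congr rfl fun z _ => by ring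

lemma apply_eq_zero_of_mYX_eq_zero {Y : Type*} [Fintype Z] {q : Y → X → Z → ℝ}
    (hq : ∀ y x z, 0 ≤ q y x z) {y : Y} {x : X} (h : mYX q y x = 0) (z : Z) : q y x z = 0 :=
  (sum_eq_zero_iff_of_nonneg fun z _ => hq y x z).1 h z (mem_univ z)

lemma apply_eq_zero_of_mYZ_eq_zero {Y : Type*} [Fintype X] {q : Y → X → Z → ℝ}
    (hq : ∀ y x z, 0 ≤ q y x z) {y : Y} {z : Z} (h : mYZ q y z = 0) (x : X) : q y x z = 0 :=
  (sum_eq_zero_iff_of_nonneg fun x _ => hq y x z).1 h x (mem_univ x)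

variable [DecidableEq X] [DecidableEq Z]

/-- The law of `(Y, X, Z)` when `(X, Z) ∼ r` and `Y = (X, Z)`. -/
def copyJoint (r : X → Z → ℝ) : X × Z → X → Z → ℝ :=
  fun y x z => if y = (x, z) then r x z else 0

variable (r : X → Z → ℝ)

lemma copyJoint_diag (x : X) (z : Z) : copyJoint r (x, z) x z = r x z := if_pos rfl

lemma mYX_copyJoint [Fintype Z] (y : X × Z) (x : X) :
    mYX (copyJoint r) y x = if x = y.1 then r y.1 y.2 else 0 := by
  obtain ⟨a, b⟩ := y
  by_cases h : x = a
  · subst h; simp [mYX, copyJoint]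
  · simp [mYX, copyJoint, Prod.ext_iff, Ne.symm h, h]

lemma mYZ_copyJoint [Fintype X] (y : X × Z) (z : Z) :
    mYZ (copyJoint r) y z = if z = y.2 then r y.1 y.2 else 0 := by
  obtain ⟨a, b⟩ := y
  by_cases h : z = b
  · subst h; simp [mYZ, copyJoint]
  · simp [mYZ, copyJoint, Prod.ext_iff, Ne.symm h, h]

variable [Fintype X] [Fintype Z]

lemma mXZ_copyJoint (x : X) (z : Z) : mXZ (copyJoint r) x z = r x z := by
  simp [mXZ, copyJoint]

lemma mZ_copyJoint (z : Z) : mZ (copyJoint r) z = ∑ x, r x z := by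
  rw [mZ, sum_comm]
  exact sum_congr rfl fun x _ => mXZ_copyJoint r x z

lemma sum_copyJoint_mul (g : X × Z → X → Z → ℝ) :
    ∑ y, ∑ x, ∑ z, copyJoint r y x z * g y x z = ∑ x, ∑ z, r x z * g (x, z) x z := by
  rw [sum_comm]
  refine sum_congr rfl fun x _ => ?_
  rw [sum_comm]
  simp [copyJoint, ite_mul]

lemma sum_mYX_copyJoint_mul (g : X × Z → X → ℝ) :
    ∑ y, ∑ x, mYX (copyJoint r) y x * g y x = ∑ x, ∑ z, r x z * g (x, z) x := by
  rw [Fintype.sum_prod_type]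
  simp [mYX_copyJoint, ite_mul]

lemma sum_mYX_copyJoint_left (x : X) : ∑ y, mYX (copyJoint r) y x = ∑ z, r x z := by
  rw [Fintype.sum_prod_type]
  simp [mYX_copyJoint]

lemma sum_mYX_copyJoint_right (y : X × Z) : ∑ x, mYX (copyJoint r) y x = r y.1 y.2 := by
  simp [mYX_copyJoint]

lemma isPMF3_copyJoint (hr : ∀ x z, 0 ≤ r x z) (hr1 : ∑ x, ∑ z, r x z = 1) :
    IsPMF3 (copyJoint r) := by
  refine ⟨fun y x z => ?_, ?_⟩
  · unfold copyJoint
    split_ifs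
    exacts [hr x z, le_rfl]
  · simpa [hr1] using sum_copyJoint_mul r fun _ _ _ => 1

lemma deltaP_copyJoint (hr : ∀ x z, 0 ≤ r x z) (hr1 : ∑ x, ∑ z, r x z = 1) :
    deltaP (copyJoint r) = {copyJoint r} := by
  refine Set.eq_singleton_iff_unique_mem.2 ⟨⟨isPMF3_copyJoint r hr hr1, rfl, rfl⟩, ?_⟩
  rintro q ⟨⟨hq, -⟩, hYX, hYZ⟩
  have off_diag : ∀ y x z, y ≠ (x, z) → q y x z = 0 := by
    rintro ⟨a, b⟩ x z hne
    by_cases hx : x = a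
    · refine apply_eq_zero_of_mYZ_eq_zero hq ?_ x
      have hz : z ≠ b := fun hz => hne (by rw [hx, hz])
      simp [hYZ, mYZ_copyJoint, hz]
    · refine apply_eq_zero_of_mYX_eq_zero hq ?_ z
      simp [hYX, mYX_copyJoint, hx]
  funext y x z
  by_cases hy : y = (x, z)
  · subst hy
    calc q (x, z) x z = mYX q (x, z) x :=
          (sum_eq_single z (fun z' _ hz' => off_diag (x, z) x z' (by simp [hz'.symm]))
            (by simp)).symm
      _ = copyJoint r (x, z) x z := by simp [hYX, mYX_copyJoint, copyJoint_diag]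
  · rw [off_diag y x z hy, copyJoint, if_neg hy]

lemma UIX_copyJoint (hr : ∀ x z, 0 ≤ r x z) (hr1 : ∑ x, ∑ z, r x z = 1) :
    UIX (copyJoint r) = CMI_YX_gZ (copyJoint r) := by
  simp [UIX, deltaP_copyJoint r hr hr1]

lemma CMI_YX_gZ_copyJoint_mul {px : X → ℝ} {pz : Z → ℝ} (hpx : ∑ x, px x = 1)
    (hpz : ∑ z, pz z = 1) : CMI_YX_gZ (copyJoint fun x z => px x * pz z) = entropy px := by
  rw [CMI_YX_gZ, sum_copyJoint_mul, ← sum_sum_neg_mul_mul_log hpz]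
  refine sum_congr rfl fun x _ => sum_congr rfl fun z _ => ?_
  rw [copyJoint_diag, mZ_copyJoint, ← sum_mul, hpx, mYZ_copyJoint, if_pos rfl, mXZ_copyJoint]
  exact mul_mul_log_of_eq_inv fun ha hb => by field_simp

lemma MI2_mYX_copyJoint_mul {px : X → ℝ} {pz : Z → ℝ} (hpz : ∑ z, pz z = 1) :
    MI2 (mYX (copyJoint fun x z => px x * pz z)) = entropy px := by
  rw [MI2, sum_mYX_copyJoint_mul, ← sum_sum_neg_mul_mul_log hpz]
  refine sum_congr rfl fun x _ => sum_congr rfl fun z _ => ?_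
  rw [mYX_copyJoint, if_pos rfl, sum_mYX_copyJoint_left, ← mul_sum, hpz, mul_one,
    sum_mYX_copyJoint_right]
  exact mul_mul_log_of_eq_inv fun ha hb => by field_simp

end

theorem pair_decomposition_general
    (px pz : Fin 2 → ℝ) (hpx : IsDist px) (hpz : IsDist pz) :
    UIX (fun (y : Fin 2 × Fin 2) (x : Fin 2) (z : Fin 2) =>
        if y = (x, z) then px x * pz z else 0) =
      CMI_YX_gZ (fun (y : Fin 2 × Fin 2) (x : Fin 2) (z : Fin 2) =>
        if y = (x, z) then px x * pz z else 0) ∧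
    CMI_YX_gZ (fun (y : Fin 2 × Fin 2) (x : Fin 2) (z : Fin 2) =>
        if y = (x, z) then px x * pz z else 0) = entropy px ∧
    MI2 (mYX (fun (y : Fin 2 × Fin 2) (x : Fin 2) (z : Fin 2) =>
        if y = (x, z) then px x * pz z else 0)) -
      UIX (fun (y : Fin 2 × Fin 2) (x : Fin 2) (z : Fin 2) =>
        if y = (x, z) then px x * pz z else 0) = 0 ∧
    CMI_YX_gZ (fun (y : Fin 2 × Fin 2) (x : Fin 2) (z : Fin 2) =>
        if y = (x, z) then px x * pz z else 0) -
      UIX (fun (y : Fin 2 × Fin 2) (x : Fin 2) (z : Fin 2) =>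
        if y = (x, z) then px x * pz z else 0) = 0 := by
  have hr : ∀ x z, 0 ≤ px x * pz z := fun x z => mul_nonneg (hpx.1 x) (hpz.1 z)
  have hr1 : ∑ x, ∑ z, px x * pz z = 1 := by
    rw [← Finset.sum_mul_sum, hpx.2, hpz.2, one_mul]
  have hUI := UIX_copyJoint _ hr hr1
  have hCMI := CMI_YX_gZ_copyJoint_mul hpx.2 hpz.2
  have hMI := MI2_mYX_copyJoint_mul (px := px) hpz.2
  exact ⟨hUI, hCMI, sub_eq_zero.2 (hMI.trans (hCMI.symm.trans hUI.symm)),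
    sub_eq_zero.2 hUI.symm⟩

/-- purely unique interaction. If `X, Z` are independent binary variables
with positive entropy and `Y = (X, Z)`, then `UI(Y;X∖Z) = I(Y;X|Z) = H(X)` and
`SI = CI = 0`. -/
theorem pair_decomposition
    (px pz : Fin 2 → ℝ) (hpx : IsDist px) (hpz : IsDist pz)
    (hx : 0 < entropy px) (hz : 0 < entropy pz) :
    UIX (fun (y : Fin 2 × Fin 2) (x : Fin 2) (z : Fin 2) =>
        if y = (x, z) then px x * pz z else 0) =
      CMI_YX_gZ (fun (y : Fin 2 × Fin 2) (x : Fin 2) (z : Fin 2) =>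
        if y = (x, z) then px x * pz z else 0) ∧
    CMI_YX_gZ (fun (y : Fin 2 × Fin 2) (x : Fin 2) (z : Fin 2) =>
        if y = (x, z) then px x * pz z else 0) = entropy px ∧
    MI2 (mYX (fun (y : Fin 2 × Fin 2) (x : Fin 2) (z : Fin 2) =>
        if y = (x, z) then px x * pz z else 0)) -
      UIX (fun (y : Fin 2 × Fin 2) (x : Fin 2) (z : Fin 2) =>
        if y = (x, z) then px x * pz z else 0) = 0 ∧
    CMI_YX_gZ (fun (y : Fin 2 × Fin 2) (x : Fin 2) (z : Fin 2) =>
        if y = (x, z) then px x * pz z else 0) -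
      UIX (fun (y : Fin 2 × Fin 2) (x : Fin 2) (z : Fin 2) =>
        if y = (x, z) then px x * pz z else 0) = 0 :=
  pair_decomposition_general px pz hpx hpz
end
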